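/- Fix T > 0 and for each real a with a·T < 1 let k^u(a) denote the unique k > |a| satisfying T·√(k² − a²) = arccos(a/k). Then for every a with a·T < 1 one has k^u(a)²·T > a, the function a ↦ k^u(a) is differentiable at a, and its derivative equals k^u(a)·(a·T − 1) / (k^u(a)²·T − a), which is strictly negative. -/

import Mathlib

/-!
Put `θ = arccos (a / k)`. Since `√(k² - a²) = k sin θ`, the defining equation says
`k = θ / (T sin θ)` and then `a = k cos θ = θ cos θ / (T sin θ)`. The second map is strictly
decreasing on `(0, π)` (its derivative has the sign of `sin θ cos θ - θ`) and takes values in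
`(-∞, 1 / T)` (because `θ cos θ < sin θ`), so `θ` is the inverse function of it, hence continuous
and differentiable in `a`, and `dk/da = (dk/dθ) / (da/dθ)`.
-/

open Real Set Topology Filter

lemma sin_mul_cos_lt_self {θ : ℝ} (hθ : 0 < θ) : sin θ * cos θ < θ := by
  have h := sin_lt (by linarith : (0 : ℝ) < 2 * θ)
  rw [sin_two_mul] at h
  linarith

lemma mul_cos_lt_sin {θ : ℝ} (h0 : 0 < θ) (hπ : θ < π) : θ * cos θ < sin θ := by
  have hs : 0 < sin θ := sin_pos_of_pos_of_lt_pi h0 hπ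
  rcases le_or_gt (cos θ) 0 with hc | hc
  · nlinarith
  · have hπ2 : θ < π / 2 := by
      by_contra! h
      linarith [cos_nonpos_of_pi_div_two_le_of_le h (by linarith [pi_pos])]
    calc θ * cos θ < tan θ * cos θ := mul_lt_mul_of_pos_right (lt_tan h0 hπ2) hc
      _ = sin θ := by rw [tan_eq_sin_div_cos]; field_simp

lemma arccos_div_mem_Ioo {a k : ℝ} (h : |a| < k) : arccos (a / k) ∈ Ioo 0 π := by
  have hk : 0 < k := (abs_nonneg a).trans_lt h
  obtain ⟨hlo, hhi⟩ := abs_lt.1 h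
  exact ⟨arccos_pos.2 ((div_lt_one hk).2 hhi), arccos_lt_pi.2 (by rw [lt_div_iff₀ hk]; linarith)⟩

lemma sqrt_sq_sub_sq_eq_mul_sin_arccos {a k : ℝ} (hk : 0 < k) :
    √(k ^ 2 - a ^ 2) = k * sin (arccos (a / k)) := by
  have h : k ^ 2 - a ^ 2 = k ^ 2 * (1 - (a / k) ^ 2) := by field_simp
  rw [h, sqrt_mul (sq_nonneg _), sqrt_sq hk.le, sin_arccos]

lemma continuousAt_of_strictAntiOn_of_leftInvOn {α β : Type*} [LinearOrder α]
    [TopologicalSpace α] [OrderTopology α] [LinearOrder β] [TopologicalSpace β] [OrderTopology β]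
    [DenselyOrdered β] {f : β → α} {g : α → β} {s : Set α} {t : Set β} {a : α}
    (hf : StrictAntiOn f t) (hg : MapsTo g s t) (hft : MapsTo f t s) (hfg : ∀ x ∈ s, f (g x) = x)
    (hs : s ∈ 𝓝 a) (ht : t ∈ 𝓝 (g a)) : ContinuousAt g a := by
  have hanti : AntitoneOn g s := by
    intro x hx y hy hxy
    by_contra! hlt
    have := hf (hg hx) (hg hy) hlt
    rw [hfg x hx, hfg y hy] at this
    exact hxy.not_gt this
  have himage : t ⊆ g '' s := fun θ hθ =>
    ⟨f θ, hft hθ, hf.injOn (hg (hft hθ)) hθ (hfg _ (hft hθ))⟩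
  exact continuousAt_of_monotoneOn_of_image_mem_nhds (β := βᵒᵈ) hanti.dual_right hs
    (mem_of_superset ht himage)

noncomputable def kOfAngle (T θ : ℝ) : ℝ := θ / (T * sin θ)

noncomputable def aOfAngle (T θ : ℝ) : ℝ := kOfAngle T θ * cos θ

section Angle

variable {T θ : ℝ}

lemma hasDerivAt_kOfAngle (hT : T ≠ 0) (hs : sin θ ≠ 0) :
    HasDerivAt (kOfAngle T) ((sin θ - θ * cos θ) / (T * sin θ ^ 2)) θ := by
  refine ((hasDerivAt_id' θ).div ((hasDerivAt_sin θ).const_mul T)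
    (mul_ne_zero hT hs)).congr_deriv ?_
  field_simp

lemma hasDerivAt_aOfAngle (hT : T ≠ 0) (hs : sin θ ≠ 0) :
    HasDerivAt (aOfAngle T) ((sin θ * cos θ - θ) / (T * sin θ ^ 2)) θ := by
  refine ((hasDerivAt_kOfAngle hT hs).mul (hasDerivAt_cos θ)).congr_deriv ?_
  rw [kOfAngle]
  field_simp
  linear_combination -θ * sin_sq_add_cos_sq θ

lemma deriv_aOfAngle_neg (hT : 0 < T) (hθ : θ ∈ Ioo 0 π) :
    (sin θ * cos θ - θ) / (T * sin θ ^ 2) < 0 :=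
  div_neg_of_neg_of_pos (by linarith [sin_mul_cos_lt_self hθ.1])
    (mul_pos hT (pow_pos (sin_pos_of_mem_Ioo hθ) 2))

lemma strictAntiOn_aOfAngle (hT : 0 < T) : StrictAntiOn (aOfAngle T) (Ioo 0 π) := by
  refine strictAntiOn_of_hasDerivWithinAt_neg (convex_Ioo 0 π) (fun x hx => ?_)
    (fun x hx => (hasDerivAt_aOfAngle hT.ne'
      (sin_pos_of_mem_Ioo (interior_subset hx)).ne').hasDerivWithinAt)
    (fun x hx => deriv_aOfAngle_neg hT (by rwa [interior_Ioo] at hx))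
  exact (hasDerivAt_aOfAngle hT.ne' (sin_pos_of_mem_Ioo hx).ne').continuousAt.continuousWithinAt

lemma aOfAngle_mul_lt_one (hT : 0 < T) (hθ : θ ∈ Ioo 0 π) : aOfAngle T θ * T < 1 := by
  have hs := sin_pos_of_mem_Ioo hθ
  have h : aOfAngle T θ * T = θ * cos θ / sin θ := by
    rw [aOfAngle, kOfAngle]
    field_simp
  rw [h, div_lt_one hs]
  exact mul_cos_lt_sin hθ.1 hθ.2

lemma kOfAngle_sq_mul_sub_aOfAngle_pos (hT : 0 < T) (hθ : θ ∈ Ioo 0 π) :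
    0 < kOfAngle T θ ^ 2 * T - aOfAngle T θ := by
  have hs := sin_pos_of_mem_Ioo hθ
  have h : kOfAngle T θ ^ 2 * T - aOfAngle T θ =
      θ * (θ - sin θ * cos θ) / (T * sin θ ^ 2) := by
    rw [aOfAngle, kOfAngle]
    field_simp
  rw [h]
  exact div_pos (mul_pos hθ.1 (by linarith [sin_mul_cos_lt_self hθ.1])) (by positivity)

lemma deriv_kOfAngle_mul_inv_deriv_aOfAngle (hT : 0 < T) (hθ : θ ∈ Ioo 0 π) :
    (sin θ - θ * cos θ) / (T * sin θ ^ 2) * ((sin θ * cos θ - θ) / (T * sin θ ^ 2))⁻¹ =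
      kOfAngle T θ * (aOfAngle T θ * T - 1) / (kOfAngle T θ ^ 2 * T - aOfAngle T θ) := by
  have hs := sin_pos_of_mem_Ioo hθ
  have hsc : sin θ * cos θ - θ ≠ 0 := by linarith [sin_mul_cos_lt_self hθ.1]
  rw [eq_div_iff (kOfAngle_sq_mul_sub_aOfAngle_pos hT hθ).ne', aOfAngle, kOfAngle]
  field_simp
  ring

lemma arccos_mem_Ioo_and_angle_eq {a k : ℝ} (hT : 0 < T) (h : |a| < k)
    (heq : T * √(k ^ 2 - a ^ 2) = arccos (a / k)) :
    arccos (a / k) ∈ Ioo 0 π ∧ kOfAngle T (arccos (a / k)) = k ∧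
      aOfAngle T (arccos (a / k)) = a := by
  have hk : 0 < k := (abs_nonneg a).trans_lt h
  have hθ := arccos_div_mem_Ioo h
  have hs := sin_pos_of_mem_Ioo hθ
  have hkθ : kOfAngle T (arccos (a / k)) = k := by
    rw [sqrt_sq_sub_sq_eq_mul_sin_arccos hk] at heq
    rw [kOfAngle, div_eq_iff (by positivity)]
    linear_combination -heq
  refine ⟨hθ, hkθ, ?_⟩
  have hcos : cos (arccos (a / k)) = a / k := by
    obtain ⟨hlo, hhi⟩ := abs_lt.1 h
    exact cos_arccos (by rw [le_div_iff₀ hk]; linarith) (by rw [div_le_one hk]; linarith)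
  rw [aOfAngle, hkθ, hcos]
  field_simp

end Angle

theorem stmt5 (T : ℝ) (hT : 0 < T) (ku : ℝ → ℝ)
    (hku : ∀ a : ℝ, a * T < 1 →
      |a| < ku a ∧ T * Real.sqrt ((ku a) ^ 2 - a ^ 2) = Real.arccos (a / ku a)) :
    ∀ a : ℝ, a * T < 1 →
      (ku a) ^ 2 * T > a ∧
      HasDerivAt ku (ku a * (a * T - 1) / ((ku a) ^ 2 * T - a)) a ∧
      ku a * (a * T - 1) / ((ku a) ^ 2 * T - a) < 0 := by
  intro a ha
  set g : ℝ → ℝ := fun x => arccos (x / ku x)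
  have hpar : ∀ x, x * T < 1 → g x ∈ Ioo 0 π ∧ kOfAngle T (g x) = ku x ∧ aOfAngle T (g x) = x :=
    fun x hx => arccos_mem_Ioo_and_angle_eq hT (hku x hx).1 (hku x hx).2
  obtain ⟨hθ, hk, ha'⟩ := hpar a ha
  have hS : {x : ℝ | x * T < 1} ∈ 𝓝 a :=
    (isOpen_lt (continuous_id.mul continuous_const) continuous_const).mem_nhds ha
  have hs := (sin_pos_of_mem_Ioo hθ).ne'
  have hg_cont : ContinuousAt g a :=
    continuousAt_of_strictAntiOn_of_leftInvOn (strictAntiOn_aOfAngle hT) (fun x hx => (hpar x hx).1)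
      (fun _ hθ' => aOfAngle_mul_lt_one hT hθ') (fun x hx => (hpar x hx).2.2) hS
      (isOpen_Ioo.mem_nhds hθ)
  have hg := HasDerivAt.of_local_left_inverse hg_cont (hasDerivAt_aOfAngle hT.ne' hs)
    (deriv_aOfAngle_neg hT hθ).ne (eventually_of_mem hS fun x hx => (hpar x hx).2.2)
  have hku_deriv := ((hasDerivAt_kOfAngle hT.ne' hs).comp a hg).congr_of_eventuallyEq
    (eventually_of_mem hS fun x hx => ((hpar x hx).2.1).symm)
  have hpos := kOfAngle_sq_mul_sub_aOfAngle_pos hT hθ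
  rw [deriv_kOfAngle_mul_inv_deriv_aOfAngle hT hθ, hk, ha'] at hku_deriv
  rw [hk, ha'] at hpos
  have hk0 : 0 < ku a := (abs_nonneg a).trans_lt (hku a ha).1
  exact ⟨by linarith, hku_deriv,
    div_neg_of_neg_of_pos (mul_neg_of_pos_of_neg hk0 (by linarith)) hpos⟩
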